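/- arXiv:2009.00188 — 3 statements merged into one kernel-verified Lean document; each statement's English description precedes it below -/
import Mathlib

section
/- If in a solution each part Rⱼ contains exactly one element of each Sᵢ except that it contains exactly two elements of S_{2i} for each even index 2i with φ(i) = j, and the target weight of each part is T + B where T is the transversal weight, then for each j the sum Σ_{i : φ(i) = j} v_i equals B; hence the sets B_j = {v_i : φ(i) = j} form a solution to the Bin Packing instance. -/
/-! Split the weight of `R` row by row. Each of the `n + 1` even rows meets `R` once, so they
contribute `(kB)² + (kB)⁴ + (n - 1) / (2n - 2) = T - kB`; odd row `2t + 1` contributes `v t`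
or `2 v t`, so the odd rows contribute `∑ v + ∑_{φ t = j} v t = kB + ∑_{φ t = j} v t`.
Comparing with `T + B` gives the claim. -/

open Finset

theorem Finset.sum_eq_sum_inter_of_subset_biUnion {ι α M : Type*} [DecidableEq α]
    [AddCommMonoid M] {s : Finset ι} {S : ι → Finset α} {R : Finset α}
    (hS : (s : Set ι).PairwiseDisjoint S) (hR : R ⊆ s.biUnion S) (f : α → M) :
    ∑ x ∈ R, f x = ∑ i ∈ s, ∑ x ∈ R ∩ S i, f x := by
  have hRS : (s : Set ι).PairwiseDisjoint fun i => R ∩ S i :=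
    hS.mono fun _ => inter_subset_right
  rw [← sum_biUnion hRS, ← inter_biUnion, inter_eq_left.2 hR]

theorem Finset.sum_range_two_mul_add_one {M : Type*} [AddCommMonoid M] (g : ℕ → M) :
    ∀ n, ∑ i ∈ range (2 * n + 1), g i =
      ∑ t ∈ range (n + 1), g (2 * t) + ∑ t ∈ range n, g (2 * t + 1)
  | 0 => by simp
  | n + 1 => by
    rw [show 2 * (n + 1) + 1 = 2 * n + 1 + 1 + 1 by ring, sum_range_succ, sum_range_succ,
      sum_range_two_mul_add_one g n, sum_range_succ (fun t => g (2 * t)) (n + 1),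
      sum_range_succ (fun t => g (2 * t + 1)) n, show 2 * (n + 1) = 2 * n + 1 + 1 by ring]
    abel

theorem Finset.sum_eq_of_card_eq_one {α M : Type*} [AddCommMonoid M] {s : Finset α}
    {f : α → M} {c : M} (hs : #s = 1) (hf : ∀ x ∈ s, f x = c) : ∑ x ∈ s, f x = c := by
  rw [sum_eq_card_nsmul hf, hs, one_smul]

theorem sum_range_succ_of_interior_eq {g : ℕ → ℚ} {n : ℕ} (hn : 2 ≤ n)
    (hmid : ∀ t, 0 < t → t < n → g t = 1 / (2 * n - 2)) :
    ∑ t ∈ range (n + 1), g t = g 0 + g n + 1 / 2 := by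
  obtain ⟨m, rfl⟩ : ∃ m, n = m + 1 := ⟨n - 1, by omega⟩
  have hm : (m : ℚ) ≠ 0 := by exact_mod_cast (show m ≠ 0 by omega)
  have hinterior : ∑ t ∈ range m, g (t + 1) = 1 / 2 := by
    rw [sum_congr rfl fun t ht => hmid (t + 1) t.succ_pos (by simpa using ht), sum_const,
      card_range, nsmul_eq_mul, Nat.cast_succ, show 2 * ((m : ℚ) + 1) - 2 = 2 * m by ring]
    field_simp
  rw [sum_range_succ, sum_range_succ', hinterior]
  ring

theorem sum_range_eq_sum_add_sum_filter {v g : ℕ → ℚ} {p : ℕ → Prop} [DecidablePred p]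
    {n : ℕ} (hg : ∀ t < n, g t = (if p t then 2 else 1) * v t) :
    ∑ t ∈ range n, g t = ∑ t ∈ range n, v t + ∑ t ∈ (range n).filter p, v t := by
  rw [sum_filter, ← sum_add_distrib]
  refine sum_congr rfl fun t ht => ?_
  rw [hg t (mem_range.1 ht)]
  split_ifs <;> ring

theorem reduction_soundness_general {α : Type*} [DecidableEq α]
    (n k B : ℕ) (hn : 2 ≤ n)
    (S : ℕ → Finset α)
    (hdisj : ∀ i i', i ≠ i' → Disjoint (S i) (S i'))
    (w : α → ℚ) (v : ℕ → ℚ)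
    (hvsum : ∑ t ∈ range n, v t = (k * B : ℚ))
    (hw0 : ∀ x ∈ S 0, w x = ((k * B : ℚ)) ^ 2)
    (hwlast : ∀ x ∈ S (2 * n), w x = ((k * B : ℚ)) ^ 4)
    (hwodd : ∀ i, Even i → i ≠ 0 → i ≠ 2 * n → i < 2 * n →
      ∀ x ∈ S i, w x = 1 / (2 * (n : ℚ) - 2))
    (hweven : ∀ t < n, ∀ x ∈ S (2 * t + 1), w x = v t)
    (φ : ℕ → ℕ) (j : ℕ)
    (R : Finset α)
    (hR : R ⊆ (range (2 * n + 1)).biUnion S)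
    (hRdup : ∀ t < n, φ t = j → (R ∩ S (2 * t + 1)).card = 2)
    (hRone : ∀ i ∈ range (2 * n + 1),
      (¬ ∃ t < n, i = 2 * t + 1 ∧ φ t = j) → (R ∩ S i).card = 1)
    (hweight : ∑ x ∈ R, w x =
      (((k * B : ℚ)) ^ 2 + ((k * B : ℚ)) ^ 4 + 1 / 2 + (k * B : ℚ)) + (B : ℚ)) :
    ∑ t ∈ (range n).filter (fun t => φ t = j), v t = (B : ℚ) := by
  have hcard_even : ∀ t ≤ n, #(R ∩ S (2 * t)) = 1 := fun t ht =>
    hRone _ (mem_range.2 (by omega)) (by rintro ⟨_, -, h, -⟩; omega)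
  have hcard_odd : ∀ t < n, #(R ∩ S (2 * t + 1)) = if φ t = j then 2 else 1 := fun t ht => by
    split_ifs with hφ
    · exact hRdup t ht hφ
    · refine hRone _ (mem_range.2 (by omega)) fun ⟨t', _, h, hφ'⟩ => hφ ?_
      rwa [show t = t' by omega]
  have heven_rows : ∑ t ∈ range (n + 1), ∑ x ∈ R ∩ S (2 * t), w x =
      ((k * B : ℚ)) ^ 2 + ((k * B : ℚ)) ^ 4 + 1 / 2 := by
    rw [sum_range_succ_of_interior_eq hn fun t ht0 htn =>
      sum_eq_of_card_eq_one (hcard_even t htn.le) fun x hx =>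
        hwodd _ (even_two_mul t) (by omega) (by omega) (by omega) x (mem_inter.1 hx).2,
      sum_eq_of_card_eq_one (hcard_even 0 (by omega)) fun x hx => hw0 x (mem_inter.1 hx).2,
      sum_eq_of_card_eq_one (hcard_even n le_rfl) fun x hx => hwlast x (mem_inter.1 hx).2]
  have hodd_rows : ∑ t ∈ range n, ∑ x ∈ R ∩ S (2 * t + 1), w x =
      (k * B : ℚ) + ∑ t ∈ (range n).filter (fun t => φ t = j), v t := by
    rw [← hvsum, sum_range_eq_sum_add_sum_filter (p := fun t => φ t = j) fun t ht => ?_]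
    rw [sum_eq_card_nsmul fun x hx => hweven t ht x (mem_inter.1 hx).2, hcard_odd t ht,
      nsmul_eq_mul]
    split_ifs <;> norm_num
  have hrows := sum_eq_sum_inter_of_subset_biUnion
    (fun i _ i' _ h => hdisj i i' h) hR w
  rw [sum_range_two_mul_add_one, heven_rows, hodd_rows] at hrows
  linarith

/-- Soundness of the reduction: with the weighted rows
`S 0, …, S (2n)` as in the reduction (first row elements weigh `(kB)²`, last
row elements weigh `(kB)⁴`, intermediate even-indexed rows weigh `1/(2n−2)`
each, and row `2t+1` elements weigh `v t` with `∑ v t = kB`), suppose part `R`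
(the part `R j` of a solution, with `φ` recording which part receives the
duplicate of each even row) contains exactly two elements of row `2t+1` when
`φ t = j` and exactly one element of every other row.  If the total weight of
`R` is `T + B` with `T = (kB)² + (kB)⁴ + 1/2 + kB`, then
`∑_{t : φ t = j} v t = B`. -/
theorem reduction_soundness {α : Type*} [DecidableEq α]
    (n k B : ℕ) (hn : 2 ≤ n) (hk : 1 ≤ k) (hB : 1 ≤ B)
    (S : ℕ → Finset α)
    (hdisj : ∀ i i', i ≠ i' → Disjoint (S i) (S i'))
    (w : α → ℚ) (v : ℕ → ℚ)
    (hv0 : ∀ j, 0 ≤ v j) (hvsum : ∑ t ∈ range n, v t = (k * B : ℚ))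
    (hw0 : ∀ x ∈ S 0, w x = ((k * B : ℚ)) ^ 2)
    (hwlast : ∀ x ∈ S (2 * n), w x = ((k * B : ℚ)) ^ 4)
    (hwodd : ∀ i, Even i → i ≠ 0 → i ≠ 2 * n → i < 2 * n →
      ∀ x ∈ S i, w x = 1 / (2 * (n : ℚ) - 2))
    (hweven : ∀ t < n, ∀ x ∈ S (2 * t + 1), w x = v t)
    (φ : ℕ → ℕ) (j : ℕ)
    (R : Finset α)
    (hR : R ⊆ (range (2 * n + 1)).biUnion S)
    (hRdup : ∀ t < n, φ t = j → (R ∩ S (2 * t + 1)).card = 2)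
    (hRone : ∀ i ∈ range (2 * n + 1),
      (¬ ∃ t < n, i = 2 * t + 1 ∧ φ t = j) → (R ∩ S i).card = 1)
    (hweight : ∑ x ∈ R, w x =
      (((k * B : ℚ)) ^ 2 + ((k * B : ℚ)) ^ 4 + 1 / 2 + (k * B : ℚ)) + (B : ℚ)) :
    ∑ t ∈ (range n).filter (fun t => φ t = j), v t = (B : ℚ) :=
  reduction_soundness_general n k B hn S hdisj w v hvsum hw0 hwlast hwodd hweven φ j R hR hRdup
    hRone hweight
end

section
/- Conversely (completeness of the reduction): if v₁,…,vₙ can be partitioned into k sets B₁,…,B_k each summing to exactly B, then one can choose, for each part j and each even row 2i with v_i ∈ B_j, a duplicate assignment so that each part Rⱼ built by taking one element of each Sᵢ plus the duplicates from rows with v_i ∈ B_j has total weight exactly T + B. -/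
open Finset

lemma pickOne_card {α : Type*} [DecidableEq α] (s : Finset α) (j : ℕ) (hj : j < s.card) :
    (s.filter (fun x => s.toList.idxOf x = j)).card = 1 := by
  have hjl : j < s.toList.length := by simpa using hj
  rw [Finset.card_eq_one]
  refine ⟨s.toList.get ⟨j, hjl⟩, ?_⟩
  ext x
  simp only [Finset.mem_filter, Finset.mem_singleton]
  constructor
  · rintro ⟨hx, hidx⟩
    have hlt : s.toList.idxOf x < s.toList.length :=
      List.idxOf_lt_length_iff.2 (Finset.mem_toList.2 hx)
    have h2 := List.idxOf_get hlt
    rw [← h2]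
    congr 1
    exact Fin.ext (by simp [hidx])
  · rintro rfl
    refine ⟨Finset.mem_toList.1 (List.get_mem _ _), ?_⟩
    simpa using List.get_idxOf s.nodup_toList ⟨j, hjl⟩

lemma sum_range_two_mul {M : Type*} [AddCommMonoid M] (m : ℕ) (f : ℕ → M) :
    ∑ i ∈ range (2 * m), f i = ∑ t ∈ range m, (f (2 * t) + f (2 * t + 1)) := by
  induction m with
  | zero => simp
  | succ m ih =>
    rw [Finset.sum_range_succ, ← ih, show 2 * (m + 1) = (2 * m + 1) + 1 by ring,
      Finset.sum_range_succ, Finset.sum_range_succ]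
    · abel

/-- Completeness of the reduction: with the weighted rows
`S 0, …, S (2n)` as in the reduction (first and last rows of size `k` with
element weights `(kB)²` and `(kB)⁴` respectively, intermediate even-indexed
rows of size `k` with element weights `1/(2n−2)`, and rows `2t+1` of size
`k+1` with element weights `v t`, where `∑ v t = kB`), if `φ` assigns each
item `t < n` to a bin `φ t < k` so that every bin sums to exactly `B`, then one
can build parts `R 0, …, R (k-1)`, each taking exactly one element of every
row plus one duplicate from each row `2t+1` with `φ t = j`, that are pairwise
disjoint and each of total weight exactly `T + B`,
where `T = (kB)² + (kB)⁴ + 1/2 + kB`. -/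
theorem reduction_completeness {α : Type*} [DecidableEq α]
    (n k B : ℕ) (hn : 2 ≤ n) (hk : 1 ≤ k) (hB : 1 ≤ B)
    (S : ℕ → Finset α)
    (hdisj : ∀ i i', i ≠ i' → Disjoint (S i) (S i'))
    (hcard0 : (S 0).card = k)
    (hcardlast : (S (2 * n)).card = k)
    (hcardodd : ∀ i, Even i → i ≠ 0 → i ≠ 2 * n → i < 2 * n → (S i).card = k)
    (hcardeven : ∀ t < n, (S (2 * t + 1)).card = k + 1)
    (w : α → ℚ) (v : ℕ → ℚ)
    (hv0 : ∀ t, 0 ≤ v t) (hvsum : ∑ t ∈ range n, v t = (k * B : ℚ))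
    (hw0 : ∀ x ∈ S 0, w x = ((k * B : ℚ)) ^ 2)
    (hwlast : ∀ x ∈ S (2 * n), w x = ((k * B : ℚ)) ^ 4)
    (hwodd : ∀ i, Even i → i ≠ 0 → i ≠ 2 * n → i < 2 * n →
      ∀ x ∈ S i, w x = 1 / (2 * (n : ℚ) - 2))
    (hweven : ∀ t < n, ∀ x ∈ S (2 * t + 1), w x = v t)
    (φ : ℕ → ℕ) (hφ : ∀ t < n, φ t < k)
    (hbins : ∀ j < k, ∑ t ∈ (range n).filter (fun t => φ t = j), v t = (B : ℚ)) :
    ∃ R : ℕ → Finset α,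
      (∀ j < k, R j ⊆ (range (2 * n + 1)).biUnion S) ∧
      (∀ j < k, ∀ j' < k, j ≠ j' → Disjoint (R j) (R j')) ∧
      (∀ j < k, ∀ t < n, φ t = j → (R j ∩ S (2 * t + 1)).card = 2) ∧
      (∀ j < k, ∀ i ∈ range (2 * n + 1),
        (¬ ∃ t < n, i = 2 * t + 1 ∧ φ t = j) → (R j ∩ S i).card = 1) ∧
      (∀ j < k, ∑ x ∈ R j, w x =
        (((k * B : ℚ)) ^ 2 + ((k * B : ℚ)) ^ 4 + 1 / 2 + (k * B : ℚ)) + (B : ℚ)) := by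
  classical
  set Q : ℕ → ℕ → α → Prop := fun i j x =>
    (S i).toList.idxOf x = j ∨
      (i % 2 = 1 ∧ (S i).toList.idxOf x = k ∧ φ (i / 2) = j) with hQdef
  set R : ℕ → Finset α :=
    fun j => (range (2 * n + 1)).biUnion (fun i => (S i).filter (Q i j)) with hRdef
  -- all even rows have card k
  have hevencard : ∀ i, i % 2 = 0 → i < 2 * n + 1 → (S i).card = k := by
    intro i h2 hi
    rcases eq_or_ne i 0 with rfl | h0
    · exact hcard0
    rcases eq_or_ne i (2 * n) with rfl | hlast
    · exact hcardlast
    · exact hcardodd i (Nat.even_iff.2 h2) h0 hlast (by omega)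
  -- cardinality of each piece
  have hfiltercard : ∀ j, j < k → ∀ i, i < 2 * n + 1 →
      ((S i).filter (Q i j)).card = if i % 2 = 1 ∧ φ (i / 2) = j then 2 else 1 := by
    intro j hj i hi
    rcases Nat.even_or_odd i with he | ho
    · have h2 : i % 2 = 0 := Nat.even_iff.1 he
      rw [if_neg (by omega)]
      have heq : (S i).filter (Q i j)
          = (S i).filter (fun x => (S i).toList.idxOf x = j) := by
        refine Finset.filter_congr (fun x _ => ?_)
        constructor
        · rintro (h | ⟨h1, -⟩)
          · exact h
          · omega
        · exact Or.inl
      rw [heq, pickOne_card _ _ (by rw [hevencard i h2 hi]; exact hj)]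
    · have h2 : i % 2 = 1 := Nat.odd_iff.1 ho
      have htn : i / 2 < n := by omega
      have hcardi : (S i).card = k + 1 := by
        have : i = 2 * (i / 2) + 1 := by omega
        rw [this]; exact hcardeven _ htn
      by_cases hφj : φ (i / 2) = j
      · rw [if_pos ⟨h2, hφj⟩]
        have heq : (S i).filter (Q i j)
            = (S i).filter (fun x => (S i).toList.idxOf x = j)
              ∪ (S i).filter (fun x => (S i).toList.idxOf x = k) := by
          rw [← Finset.filter_or]
          refine Finset.filter_congr (fun x _ => ?_)
          constructor
          · rintro (h | ⟨-, h, -⟩)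
            · exact Or.inl h
            · exact Or.inr h
          · rintro (h | h)
            · exact Or.inl h
            · exact Or.inr ⟨h2, h, hφj⟩
        have hd : Disjoint ((S i).filter (fun x => (S i).toList.idxOf x = j))
            ((S i).filter (fun x => (S i).toList.idxOf x = k)) := by
          rw [Finset.disjoint_left]
          intro x hx hx'
          have h1 := (Finset.mem_filter.1 hx).2
          have h2' := (Finset.mem_filter.1 hx').2
          omega
        rw [heq, Finset.card_union_of_disjoint hd,
          pickOne_card _ _ (by omega), pickOne_card _ _ (by omega)]
      · rw [if_neg (by tauto)]
        have heq : (S i).filter (Q i j)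
            = (S i).filter (fun x => (S i).toList.idxOf x = j) := by
          refine Finset.filter_congr (fun x _ => ?_)
          constructor
          · rintro (h | ⟨-, -, h⟩)
            · exact h
            · exact absurd h hφj
          · exact Or.inl
        rw [heq, pickOne_card _ _ (by omega)]
  -- intersection with each row
  have hinter : ∀ j i, i < 2 * n + 1 → R j ∩ S i = (S i).filter (Q i j) := by
    intro j i hi
    ext x
    simp only [Finset.mem_inter]
    constructor
    · rintro ⟨hxR, hxS⟩
      obtain ⟨i', hi', hx'⟩ := Finset.mem_biUnion.1 hxR
      have hxS' := (Finset.mem_filter.1 hx').1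
      have : i' = i := by
        by_contra hne
        exact Finset.disjoint_left.1 (hdisj i' i hne) hxS' hxS
      rwa [this] at hx'
    · intro hx
      exact ⟨Finset.mem_biUnion.2 ⟨i, Finset.mem_range.2 hi, hx⟩,
        (Finset.mem_filter.1 hx).1⟩
  refine ⟨R, ?_, ?_, ?_, ?_, ?_⟩
  · -- subset
    intro j hj x hx
    obtain ⟨i, hi, hx'⟩ := Finset.mem_biUnion.1 hx
    exact Finset.mem_biUnion.2 ⟨i, hi, (Finset.mem_filter.1 hx').1⟩
  · -- pairwise disjoint
    intro j hj j' hj' hne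
    rw [Finset.disjoint_left]
    intro x hx hx'
    obtain ⟨i, hi, hxi⟩ := Finset.mem_biUnion.1 hx
    obtain ⟨i', hi', hxi'⟩ := Finset.mem_biUnion.1 hx'
    have hii : i' = i := by
      by_contra hcon
      exact Finset.disjoint_left.1 (hdisj i' i hcon)
        (Finset.mem_filter.1 hxi').1 (Finset.mem_filter.1 hxi).1
    subst hii
    have hq := (Finset.mem_filter.1 hxi).2
    have hq' := (Finset.mem_filter.1 hxi').2
    rcases hq with h | ⟨-, h, hph⟩ <;> rcases hq' with h' | ⟨-, h', hph'⟩ <;> omega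
  · -- double rows
    intro j hj t ht hφt
    rw [hinter j (2 * t + 1) (by omega), hfiltercard j hj (2 * t + 1) (by omega),
      if_pos ⟨by omega, by rw [show (2 * t + 1) / 2 = t by omega]; exact hφt⟩]
  · -- single rows
    intro j hj i hi hno
    rw [Finset.mem_range] at hi
    rw [hinter j i hi, hfiltercard j hj i hi, if_neg]
    rintro ⟨h2, hφ2⟩
    exact hno ⟨i / 2, by omega, by omega, hφ2⟩
  · -- weights
    intro j hj
    have hsplit : ∑ x ∈ R j, w x
        = ∑ i ∈ range (2 * n + 1), ∑ x ∈ (S i).filter (Q i j), w x := by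
      refine Finset.sum_biUnion ?_
      intro a _ b _ hab
      exact Finset.disjoint_filter_filter (hdisj a b hab)
    have hkey : ∀ i, i < 2 * n + 1 → ∀ c : ℚ, (∀ x ∈ S i, w x = c) →
        ∑ x ∈ (S i).filter (Q i j), w x
          = ((if i % 2 = 1 ∧ φ (i / 2) = j then 2 else 1 : ℕ) : ℚ) * c := by
      intro i hi c hc
      rw [Finset.sum_congr rfl fun x hx => hc x (Finset.mem_filter.1 hx).1,
        Finset.sum_const, hfiltercard j hj i hi, nsmul_eq_mul]
    obtain ⟨m, rfl⟩ : ∃ m, n = m + 1 := ⟨n - 1, by omega⟩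
    have hm : 1 ≤ m := by omega
    rw [hsplit, Finset.sum_range_succ, sum_range_two_mul, Finset.sum_add_distrib]
    have hf0 : ∑ x ∈ (S 0).filter (Q 0 j), w x = ((k * B : ℚ)) ^ 2 := by
      rw [hkey 0 (by omega) _ hw0]; norm_num
    have hflast : ∑ x ∈ (S (2 * (m + 1))).filter (Q (2 * (m + 1)) j), w x
        = ((k * B : ℚ)) ^ 4 := by
      rw [hkey (2 * (m + 1)) (by omega) _ hwlast]
      rw [if_neg (by omega)]; norm_num
    have hfodd : ∀ t, t < m + 1 → ∑ x ∈ (S (2 * t + 1)).filter (Q (2 * t + 1) j), w x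
        = v t + (if φ t = j then v t else 0) := by
      intro t ht
      rw [hkey (2 * t + 1) (by omega) _ (hweven t ht)]
      have h1 : (2 * t + 1) % 2 = 1 := by omega
      have h2 : (2 * t + 1) / 2 = t := by omega
      rw [h1, h2]
      by_cases h : φ t = j <;> simp [h] <;> ring
    have hfmid : ∀ t, t < m → ∑ x ∈ (S (2 * (t + 1))).filter (Q (2 * (t + 1)) j), w x
        = 1 / (2 * ((m : ℚ) + 1) - 2) := by
      intro t ht
      have := hwodd (2 * (t + 1)) (by exact even_two_mul _) (by omega) (by omega) (by omega)
      rw [hkey (2 * (t + 1)) (by omega) _ this, if_neg (by omega)]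
      push_cast; ring
    have hevensum : ∑ t ∈ range (m + 1), ∑ x ∈ (S (2 * t)).filter (Q (2 * t) j), w x
        = (m : ℚ) * (1 / (2 * ((m : ℚ) + 1) - 2)) + ((k * B : ℚ)) ^ 2 := by
      rw [Finset.sum_range_succ']
      rw [Finset.sum_congr rfl fun t ht => hfmid t (Finset.mem_range.1 ht),
        Finset.sum_const, nsmul_eq_mul]
      norm_num [hf0]
    have hoddsum : ∑ t ∈ range (m + 1), ∑ x ∈ (S (2 * t + 1)).filter (Q (2 * t + 1) j), w x
        = ((k : ℚ) * B) + (B : ℚ) := by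
      rw [Finset.sum_congr rfl fun t ht => hfodd t (Finset.mem_range.1 ht),
        Finset.sum_add_distrib, hvsum, ← Finset.sum_filter, hbins j hj]
    rw [hevensum, hoddsum, hflast]
    have hne : (m : ℚ) ≠ 0 := by positivity
    have hhalf : (m : ℚ) * (1 / (2 * ((m : ℚ) + 1) - 2)) = 1 / 2 := by
      rw [show (2 * ((m : ℚ) + 1) - 2) = 2 * m by ring, mul_one_div,
        div_eq_div_iff (by positivity) (by norm_num)]
      ring
    rw [hhalf]
    ring
end

section
/- If π is a noncrossing partition of the cyclically ordered set {1,…,m} arising as the trace of a partition of the vertex set of a planar graph drawn inside a disk with the m boundary vertices on the circle in this cyclic order, such that each part induces a connected subgraph, then π is noncrossing: there do not exist a < b < c < d with a, c in one part and b, d in a different part. (Special case: for a planar graph G embedded in a closed disk with vertices v₁,…,v_m on the boundary circle in cyclic order, if S and T are disjoint vertex sets each inducing a connected subgraph, then {v_a, v_c} ⊆ S and {v_b, v_d} ⊆ T is impossible for a < b < c < d.) -/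
/-!
Walks inside `S` and `T` give paths `p` from `v_a` to `v_c` and `q` from `v_b` to `v_d` whose
images are disjoint and lie in the closed disk. Then `(s, t) ↦ p s - q t` never vanishes on the
(simply connected) square, so it has a continuous argument there, whose total change around the
boundary of the square is `0`. On each side of the square one of the two points is a fixed boundary
point `ζ` while the other stays in the disk away from `ζ`, so the difference avoids a ray and its
change of argument along the side is read off from the corners. For interleaved endpoints the four
changes add up to `-2π`.
-/

open Set Complex
open scoped Real

theorem Complex.exists_continuous_exp_eq {A : Type*} [TopologicalSpace A] [SimplyConnectedSpace A]
    [LocallyPathConnectedSpace A] (f : C(A, ℂ)) (hf : ∀ a, f a ≠ 0) :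
    ∃ L : C(A, ℂ), ∀ a, exp (L a) = f a := by
  obtain ⟨a₀⟩ := (inferInstance : Nonempty A)
  obtain ⟨L, ⟨-, hL⟩, -⟩ :=
    isCoveringMapOn_exp.existsUnique_continuousMap_lifts f (exp_log (hf a₀)) hf
  exact ⟨L, congrFun hL⟩

theorem Complex.one_sub_mem_slitPlane {w : ℂ} (hw : ‖w‖ ≤ 1) (hw1 : w ≠ 1) :
    1 - w ∈ slitPlane := by
  rw [mem_slitPlane_iff, sub_re, one_re, sub_im, one_im, zero_sub, neg_ne_zero]
  by_contra! h
  have hre : |w.re| ≤ 1 := (abs_re_le_norm w).trans hw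
  exact hw1 (Complex.ext (by rw [one_re]; linarith [le_abs_self w.re]) h.2)

theorem Complex.im_sub_im_eq_arg_sub_arg {X : Type*} [TopologicalSpace X] [PreconnectedSpace X]
    {L : X → ℂ} (hL : Continuous L) {c : ℂ} (hc : ∀ x, exp (L x) * c ∈ slitPlane)
    (x y : X) :
    (L y).im - (L x).im = arg (exp (L y) * c) - arg (exp (L x) * c) := by
  have hc0 : c ≠ 0 := by
    rintro rfl
    simpa using hc x
  set g : X → ℂ := fun x ↦ L x - log (exp (L x) * c)
  have hg : Continuous g :=
    hL.sub ((continuous_exp.comp hL).mul continuous_const |>.clog fun x ↦ hc x)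
  have hexp_g : ∀ x, exp (g x) = c⁻¹ := fun x ↦ by
    rw [exp_sub, exp_log (slitPlane_ne_zero (hc x)), div_mul_cancel_left₀ (exp_ne_zero _)]
  have hgxy :=
    isCoveringMap_exp.const_of_comp hg (fun x y ↦ Subtype.ext (by simp only [hexp_g])) x y
  have := congrArg im hgxy
  simp only [g, sub_im, log_im] at this
  linarith

theorem Complex.im_sub_im_eq_arg_sub_arg_of_exp_eq_sub {X : Type*} [TopologicalSpace X]
    [PreconnectedSpace X] {L z : X → ℂ} (hL : Continuous L) (y : ℝ)
    (hLz : ∀ x, exp (L x) = exp (y * I) - z x) (hz : ∀ x, ‖z x‖ ≤ 1)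
    (hzy : ∀ x, z x ≠ exp (y * I)) (x x' : X) :
    (L x').im - (L x).im =
      arg (1 - z x' * exp (-(y * I))) - arg (1 - z x * exp (-(y * I))) := by
  have hu : exp (y * I) * exp (-(y * I)) = 1 := by rw [← exp_add, add_neg_cancel, exp_zero]
  have hLz' : ∀ x, exp (L x) * exp (-(y * I)) = 1 - z x * exp (-(y * I)) := fun x ↦ by
    linear_combination exp (-(y * I)) * hLz x + hu
  refine hLz' x ▸ hLz' x' ▸ im_sub_im_eq_arg_sub_arg hL (fun x ↦ hLz' x ▸ ?_) x x'
  refine one_sub_mem_slitPlane ?_ fun h ↦ hzy x ?_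
  · simpa [norm_exp] using hz x
  · linear_combination exp (y * I) * h - z x * hu

theorem Complex.arg_one_sub_exp_mul_I_of_pos {x : ℝ} (h0 : 0 < x) (h2π : x < 2 * π) :
    arg (1 - exp (x * I)) = (x - π) / 2 := by
  have hsin : 0 < 2 * Real.sin (x / 2) := by
    have := Real.sin_pos_of_pos_of_lt_pi (x := x / 2) (by linarith) (by linarith)
    linarith
  have key :
      1 - exp (x * I) = ((2 * Real.sin (x / 2) : ℝ) : ℂ) * exp (((x - π) / 2 : ℝ) * I) := by
    have hcos : Real.cos x = 2 * Real.cos (x / 2) ^ 2 - 1 := by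
      rw [← Real.cos_two_mul]; ring_nf
    have hsin : Real.sin x = 2 * Real.sin (x / 2) * Real.cos (x / 2) := by
      rw [← Real.sin_two_mul]; ring_nf
    have hpyth := congrArg ofReal (Real.sin_sq_add_cos_sq (x / 2))
    rw [exp_mul_I, exp_mul_I, ← ofReal_cos, ← ofReal_sin, ← ofReal_cos, ← ofReal_sin,
      sub_div, Real.cos_sub_pi_div_two, Real.sin_sub_pi_div_two, hcos, hsin]
    push_cast at hpyth ⊢
    linear_combination (-2 : ℂ) * hpyth
  rw [key, arg_real_mul _ hsin, arg_exp_mul_I, toIocMod_eq_self]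
  constructor <;> linarith

theorem Complex.arg_one_sub_exp_mul_I_of_neg {x : ℝ} (h0 : x < 0) (h2π : -(2 * π) < x) :
    arg (1 - exp (x * I)) = (x + π) / 2 := by
  have := arg_one_sub_exp_mul_I_of_pos (x := x + 2 * π) (by linarith) (by linarith)
  rw [ofReal_add, add_mul, exp_add, ofReal_mul, ofReal_ofNat, exp_two_pi_mul_I, mul_one] at this
  rw [this]; ring

theorem Complex.exp_mul_I_mul_exp_neg (x y : ℝ) :
    exp (x * I) * exp (-(y * I)) = exp ((x - y : ℝ) * I) := by
  rw [← exp_add]; push_cast; ring_nf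

theorem Path.range_inter_nonempty_of_interleaved {α β γ δ : ℝ} (hαβ : α < β) (hβγ : β < γ)
    (hγδ : γ < δ) (hδα : δ < α + 2 * π)
    (p : Path (exp (α * I)) (exp (γ * I))) (q : Path (exp (β * I)) (exp (δ * I)))
    (hp : range p ⊆ Metric.closedBall 0 1) (hq : range q ⊆ Metric.closedBall 0 1) :
    (range p ∩ range q).Nonempty := by
  by_contra hpq
  rw [not_nonempty_iff_eq_empty, ← disjoint_iff_inter_eq_empty] at hpq
  set P := p.extend
  set Q := q.extend
  have hPp : ∀ s, P s ∈ range p := fun s ↦ p.extend_range ▸ mem_range_self s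
  have hQq : ∀ t, Q t ∈ range q := fun t ↦ q.extend_range ▸ mem_range_self t
  have hPQ : ∀ s t, P s ≠ Q t := fun s t ↦ hpq.ne_of_mem (hPp s) (hQq t)
  have hP : ∀ s, ‖P s‖ ≤ 1 := fun s ↦ by simpa using hp (hPp s)
  have hQ : ∀ t, ‖Q t‖ ≤ 1 := fun t ↦ by simpa using hq (hQq t)
  obtain ⟨L, hL⟩ := exists_continuous_exp_eq ⟨fun x : ℝ × ℝ ↦ P x.1 - Q x.2, by fun_prop⟩
    fun x ↦ sub_ne_zero.2 (hPQ x.1 x.2)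
  -- on the bottom and top sides `q` is the fixed point, and `exp (L + π I) = q t - p s`
  have bottom := im_sub_im_eq_arg_sub_arg_of_exp_eq_sub (L := fun s ↦ L (s, 0) + π * I)
    (z := P) (by fun_prop) β (fun s ↦ by simp [exp_add, hL, P, Q]) hP
    (fun s ↦ q.extend_zero ▸ hPQ s 0) 0 1
  have right := im_sub_im_eq_arg_sub_arg_of_exp_eq_sub (L := fun t ↦ L (1, t))
    (z := Q) (by fun_prop) γ (fun t ↦ by simp [hL, P]) hQ
    (fun t h ↦ hPQ 1 t (by simp [P, h])) 0 1
  have top := im_sub_im_eq_arg_sub_arg_of_exp_eq_sub (L := fun s ↦ L (s, 1) + π * I)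
    (z := P) (by fun_prop) δ (fun s ↦ by simp [exp_add, hL, P, Q]) hP
    (fun s ↦ q.extend_one ▸ hPQ s 1) 1 0
  have left := im_sub_im_eq_arg_sub_arg_of_exp_eq_sub (L := fun t ↦ L (0, t))
    (z := Q) (by fun_prop) α (fun t ↦ by simp [hL, P]) hQ
    (fun t h ↦ hPQ 0 t (by simp [P, h])) 1 0
  simp only [add_im, P, Q, Path.extend_zero, Path.extend_one, exp_mul_I_mul_exp_neg]
    at bottom right top left
  rw [arg_one_sub_exp_mul_I_of_pos (by linarith) (by linarith),
    arg_one_sub_exp_mul_I_of_neg (by linarith) (by linarith)] at bottom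
  rw [arg_one_sub_exp_mul_I_of_pos (by linarith) (by linarith),
    arg_one_sub_exp_mul_I_of_neg (by linarith) (by linarith)] at right
  rw [arg_one_sub_exp_mul_I_of_neg (by linarith) (by linarith),
    arg_one_sub_exp_mul_I_of_neg (by linarith) (by linarith)] at top
  rw [arg_one_sub_exp_mul_I_of_pos (by linarith) (by linarith),
    arg_one_sub_exp_mul_I_of_pos (by linarith) (by linarith)] at left
  linarith [Real.pi_pos]

namespace SimpleGraph

variable {V : Type*} {G : SimpleGraph V} {pos : V → ℂ}
  (arc : ∀ {u v : V}, G.Adj u v → _root_.Path (pos u) (pos v))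

def drawing (W : Set V) : Set ℂ :=
  pos '' W ∪ {z | ∃ u v, ∃ h : G.Adj u v, u ∈ W ∧ v ∈ W ∧ z ∈ range (arc h)}

theorem Reachable.exists_path_range_subset_drawing {W : Set V} {x y : W}
    (hxy : (G.induce W).Reachable x y) :
    ∃ p : _root_.Path (pos x) (pos y), range p ⊆ drawing arc W := by
  obtain ⟨w⟩ := hxy
  induction w with
  | @nil x =>
    refine ⟨_root_.Path.refl _, ?_⟩
    rw [_root_.Path.refl_range, singleton_subset_iff]
    exact Or.inl (mem_image_of_mem pos x.2)
  | @cons x y _ hxy _ ih =>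
    obtain ⟨p, hp⟩ := ih
    have hxy' : G.Adj x y := by simpa using hxy
    refine ⟨(arc hxy').trans p, ?_⟩
    rw [_root_.Path.trans_range]
    exact union_subset (fun z hz ↦ Or.inr ⟨x, y, hxy', x.2, y.2, hz⟩) hp

theorem drawing_subset_closedBall (hball : ∀ v, pos v ∈ Metric.closedBall (0 : ℂ) 1)
    (harcball : ∀ {u v : V} (h : G.Adj u v), range (arc h) ⊆ Metric.closedBall (0 : ℂ) 1)
    (W : Set V) : drawing arc W ⊆ Metric.closedBall 0 1 := by
  rintro z (⟨v, -, rfl⟩ | ⟨u, v, h, -, -, hz⟩)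
  exacts [hball v, harcball h hz]

theorem disjoint_drawing (hinj : Function.Injective pos)
    (harcvert : ∀ {u v : V} (h : G.Adj u v), ∀ x : V,
      pos x ∈ range (arc h) → x = u ∨ x = v)
    (hnocross : ∀ {u v u' v' : V} (h : G.Adj u v) (h' : G.Adj u' v'),
      s(u, v) ≠ s(u', v') →
      range (arc h) ∩ range (arc h') ⊆ pos '' (({u, v} : Set V) ∩ ({u', v'} : Set V)))
    {S T : Set V} (hST : Disjoint S T) : Disjoint (drawing arc S) (drawing arc T) := by
  have hvert_arc : ∀ {S T : Set V}, Disjoint S T → ∀ x ∈ S, ∀ {u v} (h : G.Adj u v),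
      u ∈ T → v ∈ T → pos x ∉ range (arc h) := by
    intro S T hST x hx u v h hu hv hxh
    rcases harcvert h x hxh with rfl | rfl
    exacts [hST.ne_of_mem hx hu rfl, hST.ne_of_mem hx hv rfl]
  rw [Set.disjoint_left]
  rintro z (⟨x, hx, rfl⟩ | ⟨u, v, h, hu, hv, hz⟩)
    (⟨x', hx', hxx'⟩ | ⟨u', v', h', hu', hv', hz'⟩)
  · exact hST.ne_of_mem hx hx' (hinj hxx').symm
  · exact hvert_arc hST x hx h' hu' hv' hz'
  · exact hvert_arc hST.symm x' hx' h hu hv (hxx' ▸ hz)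
  · have hne : s(u, v) ≠ s(u', v') := by
      rw [Ne, Sym2.eq_iff]
      rintro (⟨rfl, -⟩ | ⟨rfl, -⟩)
      exacts [hST.ne_of_mem hu hu' rfl, hST.ne_of_mem hu hv' rfl]
    obtain ⟨x, ⟨hxuv, hxuv'⟩, -⟩ := hnocross h h' hne ⟨hz, hz'⟩
    have hxS : x ∈ S := by rcases hxuv with rfl | rfl <;> assumption
    have hxT : x ∈ T := by rcases hxuv' with rfl | rfl <;> assumption
    exact hST.ne_of_mem hxS hxT rfl

end SimpleGraph

theorem disk_embedding_noncrossing_general {V : Type*} (G : SimpleGraph V)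
    (pos : V → ℂ) (hinj : Function.Injective pos)
    (hball : ∀ v, pos v ∈ Metric.closedBall (0 : ℂ) 1)
    (arc : ∀ {u v : V}, G.Adj u v → Path (pos u) (pos v))
    (harcball : ∀ {u v : V} (h : G.Adj u v),
      Set.range (arc h) ⊆ Metric.closedBall (0 : ℂ) 1)
    (harcvert : ∀ {u v : V} (h : G.Adj u v), ∀ x : V,
      pos x ∈ Set.range (arc h) → x = u ∨ x = v)
    (hnocross : ∀ {u v u' v' : V} (h : G.Adj u v) (h' : G.Adj u' v'),
      s(u, v) ≠ s(u', v') →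
      Set.range (arc h) ∩ Set.range (arc h') ⊆
        pos '' (({u, v} : Set V) ∩ ({u', v'} : Set V)))
    (m : ℕ) (bd : Fin m → V)
    (θ : Fin m → ℝ) (hθmono : StrictMono θ)
    (hθrange : ∀ i, θ i ∈ Set.Ico 0 (2 * Real.pi))
    (hcirc : ∀ i, pos (bd i) = Complex.exp (θ i * Complex.I))
    (S T : Set V) (hST : Disjoint S T)
    (hS : (G.induce S).Connected) (hT : (G.induce T).Connected)
    (a b c d : Fin m) (hab : a < b) (hbc : b < c) (hcd : c < d) :
    ¬ (bd a ∈ S ∧ bd c ∈ S ∧ bd b ∈ T ∧ bd d ∈ T) := by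
  rintro ⟨haS, hcS, hbT, hdT⟩
  obtain ⟨p, hp⟩ := SimpleGraph.Reachable.exists_path_range_subset_drawing arc
    (hS.preconnected ⟨bd a, haS⟩ ⟨bd c, hcS⟩)
  obtain ⟨q, hq⟩ := SimpleGraph.Reachable.exists_path_range_subset_drawing arc
    (hT.preconnected ⟨bd b, hbT⟩ ⟨bd d, hdT⟩)
  have hdisk := SimpleGraph.drawing_subset_closedBall arc hball harcball
  obtain ⟨z, hzp, hzq⟩ := Path.range_inter_nonempty_of_interleaved (hθmono hab) (hθmono hbc)
    (hθmono hcd) (by linarith [(hθrange a).1, (hθrange d).2])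
    (p.cast (hcirc a).symm (hcirc c).symm) (q.cast (hcirc b).symm (hcirc d).symm)
    (hp.trans (hdisk S)) (hq.trans (hdisk T))
  exact (SimpleGraph.disjoint_drawing arc hinj harcvert hnocross hST).ne_of_mem
    (hp hzp) (hq hzq) rfl

/-- Noncrossing property of connected pieces in a disk embedding: let `G` be a
graph drawn in the closed unit disk (vertices are distinct points of the disk,
each edge is drawn as an injective arc in the disk whose interior avoids the
other vertices, and arcs of distinct edges meet only at positions of common
endpoints).  Suppose boundary vertices `bd 0, …, bd (m-1)` lie on the unit
circle in this cyclic order (at strictly increasing angles in `[0, 2π)`).  If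
`S` and `T` are disjoint vertex sets, each inducing a connected subgraph of
`G`, then for indices `a < b < c < d` it is impossible that
`bd a, bd c ∈ S` and `bd b, bd d ∈ T`. -/
theorem disk_embedding_noncrossing {V : Type*} (G : SimpleGraph V)
    (pos : V → ℂ) (hinj : Function.Injective pos)
    (hball : ∀ v, pos v ∈ Metric.closedBall (0 : ℂ) 1)
    (arc : ∀ {u v : V}, G.Adj u v → Path (pos u) (pos v))
    (harcball : ∀ {u v : V} (h : G.Adj u v),
      Set.range (arc h) ⊆ Metric.closedBall (0 : ℂ) 1)
    (harcinj : ∀ {u v : V} (h : G.Adj u v), Function.Injective (arc h))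
    (harcvert : ∀ {u v : V} (h : G.Adj u v), ∀ x : V,
      pos x ∈ Set.range (arc h) → x = u ∨ x = v)
    (hnocross : ∀ {u v u' v' : V} (h : G.Adj u v) (h' : G.Adj u' v'),
      s(u, v) ≠ s(u', v') →
      Set.range (arc h) ∩ Set.range (arc h') ⊆
        pos '' (({u, v} : Set V) ∩ ({u', v'} : Set V)))
    (m : ℕ) (bd : Fin m → V) (hbdinj : Function.Injective bd)
    (θ : Fin m → ℝ) (hθmono : StrictMono θ)
    (hθrange : ∀ i, θ i ∈ Set.Ico 0 (2 * Real.pi))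
    (hcirc : ∀ i, pos (bd i) = Complex.exp (θ i * Complex.I))
    (S T : Set V) (hST : Disjoint S T)
    (hS : (G.induce S).Connected) (hT : (G.induce T).Connected)
    (a b c d : Fin m) (hab : a < b) (hbc : b < c) (hcd : c < d) :
    ¬ (bd a ∈ S ∧ bd c ∈ S ∧ bd b ∈ T ∧ bd d ∈ T) :=
  disk_embedding_noncrossing_general G pos hinj hball arc harcball harcvert hnocross m bd θ hθmono
    hθrange hcirc S T hST hS hT a b c d hab hbc hcd
end
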